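/- A simplicial complex C is unimodular if and only if G^p(C), the complex obtained from C by adjoining p ghost vertices, is unimodular, for every p ≥ 0. -/

import Mathlib

open Finset

/-- A (finite) simplicial complex on ground set `V`: a collection of finite subsets of `V`
closed under taking subsets.  (The empty collection, the void complex, is allowed.) -/
structure SComplex (V : Type) where
  faces : Finset (Finset V)
  down_closed : ∀ s ∈ faces, ∀ t ⊆ s, t ∈ faces

/-- An integer matrix, viewed over `ℚ`, has a rank. -/
noncomputable def intRank {m n : Type} [Fintype n] (A : Matrix m n ℤ) : ℕ :=
  (A.map ((↑·) : ℤ → ℚ)).rank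

/-- An integer matrix `A` of rank `d` is unimodular if there is a nonzero `λ` such that
every `d × d` minor of `A` equals `0`, `λ` or `-λ`. -/
def IntUnimodular {m n : Type} [Fintype m] [Fintype n] (A : Matrix m n ℤ) : Prop :=
  ∃ lam : ℤ, lam ≠ 0 ∧ ∀ (r : Fin (intRank A) → m) (c : Fin (intRank A) → n),
    (A.submatrix r c).det = 0 ∨ (A.submatrix r c).det = lam ∨ (A.submatrix r c).det = -lam

/-- A real matrix `A` of rank `d` is unimodular if there is a nonzero `λ` such that
every `d × d` minor of `A` equals `0`, `λ` or `-λ`. -/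
def RealUnimodular {m n : Type} [Fintype m] [Fintype n] (A : Matrix m n ℝ) : Prop :=
  ∃ lam : ℝ, lam ≠ 0 ∧ ∀ (r : Fin A.rank → m) (c : Fin A.rank → n),
    (A.submatrix r c).det = 0 ∨ (A.submatrix r c).det = lam ∨ (A.submatrix r c).det = -lam

namespace SComplex

variable {V W : Type}

/-- The facets of a simplicial complex: its inclusion-maximal faces. -/
def facets [DecidableEq V] (C : SComplex V) : Finset (Finset V) :=
  C.faces.filter fun F => ∀ G ∈ C.faces, F ⊆ G → F = G

/-- The design matrix `A_{C,d}` of the hierarchical model given by the complex `C` and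
the table dimension vector `d`.  Columns are indexed by tuples `i ∈ ∏ v, [d v]`, rows by
pairs `(F, j)` with `F` a facet and `j ∈ ∏_{v ∈ F} [d v]`; the entry is `1` iff the
restriction of `i` to `F` is `j`. -/
def designMatrixD [DecidableEq V] (C : SComplex V) (d : V → ℕ) :
    Matrix ((F : {F // F ∈ C.facets}) × ((v : {v // v ∈ F.1}) → Fin (d v.1)))
      ((v : V) → Fin (d v)) ℤ :=
  fun r i => if ∀ v : {v // v ∈ r.1.1}, i v.1 = r.2 v then 1 else 0

/-- The binary design matrix `A_C = A_{C,2}`. -/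
def designMatrix [DecidableEq V] (C : SComplex V) := designMatrixD C fun _ => 2

/-- A simplicial complex is unimodular if its binary design matrix is unimodular. -/
def IsUnimodular [DecidableEq V] [Fintype V] (C : SComplex V) : Prop :=
  IntUnimodular (designMatrix C)

/-- The Alexander dual `C* = {S : Sᶜ ∉ C}`. -/
def dual [DecidableEq V] [Fintype V] (C : SComplex V) : SComplex V where
  faces := univ.filter fun s => sᶜ ∉ C.faces
  down_closed := by
    intro s hs t ht
    simp only [mem_filter, mem_univ, true_and] at hs ⊢
    intro h
    exact hs (C.down_closed _ h _ (compl_subset_compl.mpr ht))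

/-- The induced subcomplex of `C` on a vertex subset `A`. -/
def induce [DecidableEq V] (C : SComplex V) (A : Finset V) :
    SComplex {v // v ∈ A} where
  faces := univ.filter fun s => s.map (Function.Embedding.subtype fun v => v ∈ A) ∈ C.faces
  down_closed := by
    intro s hs t ht
    simp only [mem_filter, mem_univ, true_and] at hs ⊢
    exact C.down_closed _ hs _ (map_subset_map.mpr ht)

/-- The link of a set `S` in `C`, as a complex on the ground set `Sᶜ`:
`link_S(C) = {F \ S : F ∈ C, S ⊆ F}`. -/
def link [DecidableEq V] [Fintype V] (C : SComplex V) (S : Finset V) :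
    SComplex {v // v ∈ Sᶜ} where
  faces := univ.filter fun s =>
    s.map (Function.Embedding.subtype fun v => v ∈ Sᶜ) ∪ S ∈ C.faces
  down_closed := by
    intro s hs t ht
    simp only [mem_filter, mem_univ, true_and] at hs ⊢
    exact C.down_closed _ hs _ (union_subset_union_left (map_subset_map.mpr ht))

/-- The minor `link_R(C \ S)` of `C`, a complex on the ground set `(R ∪ S)ᶜ`. -/
def minorAt [DecidableEq V] [Fintype V] (C : SComplex V) (R S : Finset V) :
    SComplex {v // v ∈ (R ∪ S)ᶜ} where
  faces := univ.filter fun s =>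
    s.map (Function.Embedding.subtype fun v => v ∈ (R ∪ S)ᶜ) ∪ R ∈ C.faces
  down_closed := by
    intro s hs t ht
    simp only [mem_filter, mem_univ, true_and] at hs ⊢
    exact C.down_closed _ hs _ (union_subset_union_left (map_subset_map.mpr ht))

/-- Isomorphism of simplicial complexes: a bijection of ground sets carrying faces to faces. -/
def Isomorphic [DecidableEq W] (C : SComplex V) (D : SComplex W) : Prop :=
  ∃ e : V ≃ W, ∀ s : Finset V, s ∈ C.faces ↔ s.image (⇑e) ∈ D.faces

/-- `D` is a minor of `C` if `D` is isomorphic to `link_R(C \ S)` for some face `R` of `C`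
and vertex set `S` disjoint from `R`. -/
def IsMinor [DecidableEq V] [Fintype V] [DecidableEq W] (D : SComplex W) (C : SComplex V) :
    Prop :=
  ∃ R S : Finset V, Disjoint R S ∧ R ∈ C.faces ∧ D.Isomorphic (C.minorAt R S)

/-- The simplicial complex generated by a given collection of sets. -/
def gen [DecidableEq V] [Fintype V] (gens : Finset (Finset V)) : SComplex V where
  faces := univ.filter fun s => ∃ g ∈ gens, s ⊆ g
  down_closed := by
    intro s hs t ht
    simp only [mem_filter, mem_univ, true_and] at hs ⊢
    obtain ⟨g, hg, hsg⟩ := hs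
    exact ⟨g, hg, ht.trans hsg⟩

/-- The cone over `C`: one new vertex (the last one) is added to every face. -/
def cone {n : ℕ} (C : SComplex (Fin n)) : SComplex (Fin (n + 1)) where
  faces := univ.filter fun s => (univ.filter fun v : Fin n => v.castSucc ∈ s) ∈ C.faces
  down_closed := by
    intro s hs t ht
    simp only [mem_filter, mem_univ, true_and] at hs ⊢
    refine C.down_closed _ hs _ ?_
    intro v hv
    simp only [mem_filter, mem_univ, true_and] at hv ⊢
    exact ht hv

/-- Adding one ghost vertex (the last one) to `C`. -/
def ghost {n : ℕ} (C : SComplex (Fin n)) : SComplex (Fin (n + 1)) where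
  faces := univ.filter fun s => Fin.last n ∉ s ∧
    (univ.filter fun v : Fin n => v.castSucc ∈ s) ∈ C.faces
  down_closed := by
    intro s hs t ht
    simp only [mem_filter, mem_univ, true_and] at hs ⊢
    refine ⟨fun h => hs.1 (ht h), C.down_closed _ hs.2 _ ?_⟩
    intro v hv
    simp only [mem_filter, mem_univ, true_and] at hv ⊢
    exact ht hv

/-- The iterated cone `cone^p(C)`. -/
def conePow {n : ℕ} : (p : ℕ) → SComplex (Fin n) → SComplex (Fin (n + p))
  | 0, C => C
  | p + 1, C => cone (conePow p C)

/-- Adding `p` ghost vertices `G^p(C)`. -/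
def ghostPow {n : ℕ} : (p : ℕ) → SComplex (Fin n) → SComplex (Fin (n + p))
  | 0, C => C
  | p + 1, C => ghost (ghostPow p C)

/-- The embedding `Fin n ↪ Fin (n+1)` by `castSucc`. -/
def castSuccEmb' {n : ℕ} : Fin n ↪ Fin (n + 1) :=
  ⟨Fin.castSucc, Fin.castSucc_injective n⟩

/-- The Lawrence lifting `Λ(C)`: its facets are the old ground set `[n]` (a big facet)
together with `F ∪ {n+1}` for each facet `F` of `C`. -/
def lawrence {n : ℕ} (C : SComplex (Fin n)) : SComplex (Fin (n + 1)) :=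
  gen (insert ((univ : Finset (Fin n)).map castSuccEmb')
    (C.facets.image fun F => insert (Fin.last n) (F.map castSuccEmb')))

/-- The disjoint union `Δ_m ⊔ Δ_k` of an `m`-simplex (on the first `m+1` vertices) and
a `k`-simplex (on the remaining `k+1` vertices). -/
def disjSimplices (m k : ℕ) : SComplex (Fin (m + k + 2)) :=
  gen {univ.filter fun x : Fin (m + k + 2) => (x : ℕ) ≤ m,
    univ.filter fun x : Fin (m + k + 2) => m < (x : ℕ)}

/-- The full simplex on `k` vertices (i.e. `Δ_{k-1}`; for `k = 0` this is `Δ_{-1} = {∅}`). -/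
def fullSimplexC (k : ℕ) : SComplex (Fin k) where
  faces := univ
  down_closed := fun _ _ t _ => mem_univ t

/-- The void complex `Δ_{-2} = {}`. -/
def voidC : SComplex (Fin 0) where
  faces := ∅
  down_closed := by simp

/-- `∂Δ_k ⊔ {v}`: the boundary of a `k`-simplex together with one extra disjoint vertex. -/
def bdyDisjPt (k : ℕ) : SComplex (Fin (k + 2)) where
  faces := univ.filter fun s =>
    s ⊂ (univ.filter fun x : Fin (k + 2) => (x : ℕ) < k + 1) ∨ s = {Fin.last (k + 1)}
  down_closed := by
    intro s hs t ht
    simp only [mem_filter, mem_univ, true_and] at hs ⊢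
    rcases hs with hs | rfl
    · exact Or.inl (lt_of_le_of_lt ht hs)
    · rcases Finset.subset_singleton_iff.mp ht with rfl | rfl
      · refine Or.inl (Finset.empty_ssubset.mpr ⟨⟨0, by omega⟩, ?_⟩)
        simp
      · exact Or.inr rfl

/-- The path `P_4` on four vertices. -/
def P4 : SComplex (Fin 4) := gen {{0, 1}, {1, 2}, {2, 3}}

/-- The four-cycle `C_4`. -/
def C4 : SComplex (Fin 4) := gen {{0, 1}, {1, 2}, {2, 3}, {0, 3}}

/-- The boundary of the octahedron, with antipodal vertex pairs `(0,3)`, `(1,4)`, `(2,5)`. -/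
def O6 : SComplex (Fin 6) :=
  gen {{0, 1, 2}, {0, 1, 5}, {0, 4, 2}, {0, 4, 5}, {3, 1, 2}, {3, 1, 5}, {3, 4, 2}, {3, 4, 5}}

/-- The complex `J_1` on five vertices with facets `12, 15, 234, 345`. -/
def J1 : SComplex (Fin 5) := gen {{0, 1}, {0, 4}, {1, 2, 3}, {2, 3, 4}}

/-- The complex `J_2` on five vertices with facets `12, 235, 34, 145`. -/
def J2 : SComplex (Fin 5) := gen {{0, 1}, {1, 2, 4}, {2, 3}, {0, 3, 4}}

/-- The nuclear complexes (on `Fin` ground sets), built from disjoint unions of two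
simplices, duals thereof, and simplices, by repeatedly coning, adding ghost vertices
and taking Lawrence liftings. -/
inductive Nuclear : {n : ℕ} → SComplex (Fin n) → Prop
  | lawrence {n : ℕ} {D : SComplex (Fin n)} : Nuclear D → Nuclear D.lawrence
  | ghost {n : ℕ} {D : SComplex (Fin n)} : Nuclear D → Nuclear D.ghost
  | coneDisj (p m k : ℕ) : Nuclear (conePow p (disjSimplices m k))
  | coneDualDisj (p m k : ℕ) : Nuclear (conePow p (dual (disjSimplices (m + 1) (k + 1))))
  | simplex (k : ℕ) : Nuclear (fullSimplexC k)
  | void : Nuclear voidC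

/-- A complex on an arbitrary ground set is nuclear if it is isomorphic to a nuclear
complex on a `Fin` ground set. -/
def IsNuclear (C : SComplex V) : Prop :=
  ∃ (k : ℕ) (D : SComplex (Fin k)), Nuclear D ∧ C.Isomorphic D

/-- `C` is β-avoiding if no minor of `C` is isomorphic to `P_4`, `O_6`, `O_6*`, `J_1`,
`J_1*`, `J_2`, or `∂Δ_k ⊔ {v}` for some `k ≥ 1`. -/
def BetaAvoiding [DecidableEq V] [Fintype V] (C : SComplex V) : Prop :=
  ¬ IsMinor P4 C ∧ ¬ IsMinor O6 C ∧ ¬ IsMinor (dual O6) C ∧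
  ¬ IsMinor J1 C ∧ ¬ IsMinor (dual J1) C ∧ ¬ IsMinor J2 C ∧
  ∀ k : ℕ, 1 ≤ k → ¬ IsMinor (bdyDisjPt k) C

/-- The 1-skeleton of a complex, as a simple graph. -/
def oneSkeleton [DecidableEq V] (C : SComplex V) : SimpleGraph V where
  Adj u v := u ≠ v ∧ ({u, v} : Finset V) ∈ C.faces
  symm := by
    refine ⟨fun u v h => ?_⟩
    exact ⟨h.1.symm, by rw [Finset.pair_comm]; exact h.2⟩
  loopless := by
    refine ⟨fun u h => ?_⟩
    exact h.1 rfl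

/-- The non-ghost vertices of `C`: those `v` with `{v}` a face. -/
def nonGhost [DecidableEq V] [Fintype V] (C : SComplex V) : Finset V :=
  univ.filter fun v => ({v} : Finset V) ∈ C.faces

/-- `S` is a minimal nonface of `C`: not a face, but all proper subsets are faces. -/
def MinNonface (C : SComplex V) (S : Finset V) : Prop :=
  S ∉ C.faces ∧ ∀ t ⊂ S, t ∈ C.faces

end SComplex

/-! Ghost vertices add no facets: they only make every column of the design matrix repeat,
once for each value on the new vertices. Repeating rows and columns changes neither the rank
nor the nonzero values of the maximal minors. -/

open Function

theorem Matrix.submatrix_submatrix_of_rightInverse {α m n m₀ n₀ : Type*} (A : Matrix m n α)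
    {r : m₀ → m} {r' : m → m₀} {c : n₀ → n} {c' : n → n₀} (hr : RightInverse r' r)
    (hc : RightInverse c' c) : (A.submatrix r c).submatrix r' c' = A := by
  ext i j
  simp [hr i, hc j]

theorem Matrix.rank_submatrix_of_surjective {R m n m₀ n₀ : Type*} [CommSemiring R]
    [StrongRankCondition R] [Fintype n] [Fintype n₀] (A : Matrix m n R) {r : m₀ → m}
    {c : n₀ → n} (hr : Surjective r) (hc : Surjective c) :
    (A.submatrix r c).rank = A.rank := by
  obtain ⟨r', hr'⟩ := hr.hasRightInverse
  obtain ⟨c', hc'⟩ := hc.hasRightInverse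
  have hA := A.submatrix_submatrix_of_rightInverse hr' hc'
  refine (A.rank_submatrix_le r c).antisymm ?_
  conv_lhs => rw [← hA]
  exact Matrix.rank_submatrix_le _ r' c'

theorem intRank_submatrix_of_surjective {m n m₀ n₀ : Type} [Fintype n] [Fintype n₀]
    (A : Matrix m n ℤ) {r : m₀ → m} {c : n₀ → n} (hr : Surjective r) (hc : Surjective c) :
    intRank (A.submatrix r c) = intRank A :=
  (A.map ((↑·) : ℤ → ℚ)).rank_submatrix_of_surjective hr hc

theorem IntUnimodular.submatrix {m n m₀ n₀ : Type} [Fintype m] [Fintype n] [Fintype m₀]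
    [Fintype n₀] {A : Matrix m n ℤ} (hA : IntUnimodular A) (r : m₀ → m) (c : n₀ → n)
    (hrank : intRank (A.submatrix r c) = intRank A) : IntUnimodular (A.submatrix r c) := by
  obtain ⟨lam, hlam, hminor⟩ := hA
  unfold IntUnimodular
  rw [hrank]
  exact ⟨lam, hlam, fun r₀ c₀ => hminor (r ∘ r₀) (c ∘ c₀)⟩

theorem intUnimodular_submatrix_iff_of_surjective {m n m₀ n₀ : Type} [Fintype m] [Fintype n]
    [Fintype m₀] [Fintype n₀] (A : Matrix m n ℤ) {r : m₀ → m} {c : n₀ → n}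
    (hr : Surjective r) (hc : Surjective c) :
    IntUnimodular (A.submatrix r c) ↔ IntUnimodular A := by
  obtain ⟨r', hr'⟩ := hr.hasRightInverse
  obtain ⟨c', hc'⟩ := hc.hasRightInverse
  have hA := A.submatrix_submatrix_of_rightInverse hr' hc'
  refine ⟨fun h => ?_, fun h => h.submatrix r c (intRank_submatrix_of_surjective A hr hc)⟩
  rw [← hA]
  refine h.submatrix r' c' ?_
  rw [hA, intRank_submatrix_of_surjective A hr hc]

namespace SComplex

variable {V W : Type}

@[ext]
theorem ext {C D : SComplex V} (h : C.faces = D.faces) : C = D := by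
  cases C
  cases D
  cases h
  rfl

def map (f : V ↪ W) (C : SComplex V) : SComplex W where
  faces := C.faces.map (mapEmbedding f).toEmbedding
  down_closed := by
    rintro _ hs _ hts
    obtain ⟨s, hsC, rfl⟩ := mem_map.mp hs
    obtain ⟨t, hst, rfl⟩ := subset_map_iff.mp hts
    exact mem_map_of_mem _ (C.down_closed s hsC t hst)

variable [DecidableEq V] [DecidableEq W]

theorem facets_map (f : V ↪ W) (C : SComplex V) :
    (C.map f).facets = C.facets.map (mapEmbedding f).toEmbedding := by
  ext F
  simp only [facets, map, mem_filter, mem_map, forall_exists_index, and_imp,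
    forall_apply_eq_imp_iff₂, RelEmbedding.coe_toEmbedding, mapEmbedding_apply]
  constructor
  · rintro ⟨⟨F, hF, rfl⟩, hmax⟩
    exact ⟨F, ⟨hF, fun G hG hFG => map_injective f (hmax G hG (map_subset_map.mpr hFG))⟩, rfl⟩
  · rintro ⟨F, ⟨hF, hmax⟩, rfl⟩
    exact ⟨⟨F, hF, rfl⟩, fun G hG hFG => by rw [hmax G hG (map_subset_map.mp hFG)]⟩

noncomputable def mapRowEquiv (f : V ↪ W) (C : SComplex V) :
    ((F : {F // F ∈ C.facets}) × ({v // v ∈ F.1} → Fin 2)) ≃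
      ((F : {F // F ∈ (C.map f).facets}) × ({w // w ∈ F.1} → Fin 2)) :=
  Equiv.sigmaCongr
    ((C.facets.equivMap (mapEmbedding f).toEmbedding).trans
      (Equiv.subtypeEquivRight fun F => by rw [facets_map]))
    fun F => (F.1.equivMap f).arrowCongr (Equiv.refl (Fin 2))

theorem designMatrix_map_apply (f : V ↪ W) (C : SComplex V)
    (r : (F : {F // F ∈ C.facets}) × ({v // v ∈ F.1} → Fin 2)) (i : W → Fin 2) :
    (C.map f).designMatrix (C.mapRowEquiv f r) i = C.designMatrix r fun v => i (f v) := by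
  obtain ⟨F, j⟩ := r
  show (if ∀ w : {w // w ∈ F.1.map f}, i w = j ((F.1.equivMap f).symm w) then 1 else 0) =
    if ∀ v : {v // v ∈ F.1}, i (f v) = j v then 1 else 0
  congr 1
  rw [eq_iff_iff, (F.1.equivMap f).symm.forall_congr_left]
  simp

theorem designMatrix_map (f : V ↪ W) (C : SComplex V) :
    (C.map f).designMatrix =
      C.designMatrix.submatrix (C.mapRowEquiv f).symm fun i v => i (f v) := by
  ext r i
  obtain ⟨r, rfl⟩ := (C.mapRowEquiv f).surjective r
  rw [designMatrix_map_apply, Matrix.submatrix_apply, Equiv.symm_apply_apply]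

theorem isUnimodular_map_iff [Fintype V] [Fintype W] (f : V ↪ W) (C : SComplex V) :
    (C.map f).IsUnimodular ↔ C.IsUnimodular := by
  rw [IsUnimodular, IsUnimodular, designMatrix_map]
  exact intUnimodular_submatrix_iff_of_surjective _ (Equiv.surjective _)
    (f.injective.surjective_comp_right (γ := Fin 2))

theorem ghost_eq_map {n : ℕ} (C : SComplex (Fin n)) : C.ghost = C.map castSuccEmb' := by
  ext s
  simp only [ghost, map, mem_filter, mem_univ, true_and, mem_map, RelEmbedding.coe_toEmbedding,
    mapEmbedding_apply]
  constructor
  · rintro ⟨hlast, hC⟩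
    refine ⟨_, hC, ?_⟩
    ext w
    induction w using Fin.lastCases with
    | last => simp [castSuccEmb', hlast]
    | cast v => simp [castSuccEmb']
  · rintro ⟨t, ht, rfl⟩
    refine ⟨by simp [castSuccEmb'], ?_⟩
    convert ht
    ext v
    simp [castSuccEmb']

end SComplex

/-- A simplicial complex `C` is unimodular iff `G^p(C)`, obtained by adjoining `p` ghost
vertices, is unimodular, for every `p ≥ 0`. -/
theorem isUnimodular_iff_ghostPow_isUnimodular {n : ℕ} (C : SComplex (Fin n)) (p : ℕ) :
    C.IsUnimodular ↔ (SComplex.ghostPow p C).IsUnimodular := by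
  induction p with
  | zero => exact Iff.rfl
  | succ p ih =>
    rw [ih, SComplex.ghostPow, SComplex.ghost_eq_map, SComplex.isUnimodular_map_iff]
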